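/- arXiv:1602.06548 — 3 statements merged into one kernel-verified Lean document; each statement's English description precedes it below -/
import Mathlib

section
/- Let N ≥ n+1 and let K_N^{-S_{n+1}} be the complete graph on N vertices with the edges of a star S_{n+1} (one center joined to n leaves) deleted. Then the number of graph compositions of K_N^{-S_{n+1}} with exactly k blocks equals S(N, k) − sum over j from 1 to n of C(n, j) · S(N−j−1, k−1), where S denotes Stirling numbers of the second kind and C(n,j) a binomial coefficient. -/
/-- A graph composition of `G`: a partition of the vertex set such that each
block induces a connected subgraph. -/
def SimpleGraph.IsComposition {V : Type*} [Fintype V] [DecidableEq V] (G : SimpleGraph V)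
    (P : Finpartition (Finset.univ : Finset V)) : Prop :=
  ∀ B ∈ P.parts, (G.induce (B : Set V)).Connected

/-- `C^k(G)`: the number of graph compositions of `G` with exactly `k` blocks. -/
noncomputable def SimpleGraph.compCount {V : Type*} [Fintype V] [DecidableEq V]
    (G : SimpleGraph V) (k : ℕ) : ℕ :=
  Nat.card {P : Finpartition (Finset.univ : Finset V) //
    G.IsComposition P ∧ P.parts.card = k}

/-- Stirling numbers of the second kind. -/
def stirling2 : ℕ → ℕ → ℕ
  | 0, 0 => 1
  | 0, _ + 1 => 0
  | _ + 1, 0 => 0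
  | n + 1, k + 1 => (k + 1) * stirling2 n (k + 1) + stirling2 n k

open Finset

open Finset

def mkPart {V : Type*} [DecidableEq V] (s : Finset V) (parts : Finset (Finset V))
    (hdisj : (parts : Set (Finset V)).PairwiseDisjoint id)
    (hsup : ∀ x, x ∈ s ↔ ∃ B ∈ parts, x ∈ B)
    (hbot : ∅ ∉ parts) : Finpartition s where
  parts := parts
  supIndep := Finset.supIndep_iff_pairwiseDisjoint.mpr hdisj
  sup_parts := by ext x; simp [Finset.mem_sup, hsup]
  bot_notMem := hbot

@[simp] lemma mkPart_parts {V : Type*} [DecidableEq V] (s : Finset V)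
    (parts : Finset (Finset V)) (h1) (h2) (h3) :
    (mkPart s parts h1 h2 h3).parts = parts := rfl

section E1
variable {V : Type*} [DecidableEq V] {a : V} {t : Finset V} (ha : a ∉ t) (k : ℕ)

def E1 : {P : Finpartition (Finset.cons a t ha) // {a} ∈ P.parts ∧ P.parts.card = k + 1} ≃
    {Q : Finpartition t // Q.parts.card = k} where
  toFun P := ⟨mkPart t (P.1.parts.erase {a})
      (P.1.disjoint.subset (by exact_mod_cast erase_subset _ _))
      (by
        intro x
        constructor
        · intro hx
          obtain ⟨B, hB, hxB⟩ := P.1.exists_mem (mem_cons.mpr (Or.inr hx))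
          refine ⟨B, mem_erase.mpr ⟨?_, hB⟩, hxB⟩
          rintro rfl
          rw [mem_singleton] at hxB; subst hxB; exact ha hx
        · rintro ⟨B, hB, hxB⟩
          have hB' := mem_erase.mp hB
          have hxc : x ∈ Finset.cons a t ha := P.1.le hB'.2 hxB
          rcases mem_cons.mp hxc with rfl | h
          · exact absurd (P.1.eq_of_mem_parts hB'.2 P.2.1 hxB (mem_singleton_self x)) hB'.1
          · exact h)
      (fun h => P.1.bot_notMem (mem_erase.mp h).2),
    by
      simp only [mkPart_parts]
      rw [card_erase_of_mem P.2.1, P.2.2]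
      omega⟩
  invFun Q := ⟨mkPart (Finset.cons a t ha) (insert {a} Q.1.parts)
      (by
        rw [coe_insert]
        refine Q.1.disjoint.insert fun B hB hne => ?_
        simp only [id]
        rw [Finset.disjoint_singleton_left]
        exact fun haB => ha (Q.1.le hB haB))
      (by
        intro x
        constructor
        · intro hx
          rcases mem_cons.mp hx with rfl | h
          · exact ⟨{x}, mem_insert_self _ _, mem_singleton_self x⟩
          · obtain ⟨B, hB, hxB⟩ := Q.1.exists_mem h
            exact ⟨B, mem_insert_of_mem hB, hxB⟩
        · rintro ⟨B, hB, hxB⟩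
          rcases mem_insert.mp hB with rfl | h
          · simp only [mem_singleton] at hxB
            subst hxB; exact mem_cons_self _ _
          · exact mem_cons.mpr (Or.inr (Q.1.le h hxB)))
      (by
        intro h
        rcases mem_insert.mp h with h | h
        · exact (singleton_ne_empty a) h.symm
        · exact Q.1.bot_notMem h),
    by
      constructor
      · exact mem_insert_self _ _
      · simp only [mkPart_parts]
        rw [card_insert_of_notMem fun h => ha (Q.1.le h (mem_singleton_self a)), Q.2]⟩
  left_inv P := by
    apply Subtype.ext
    apply Finpartition.ext
    simp only [mkPart_parts]
    exact insert_erase P.2.1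
  right_inv Q := by
    apply Subtype.ext
    apply Finpartition.ext
    simp only [mkPart_parts]
    exact erase_insert fun h => ha (Q.1.le h (mem_singleton_self a))

end E1

section E2
variable {V : Type*} [DecidableEq V] {a : V} {t : Finset V} (ha : a ∉ t) (k : ℕ)

/-- Restriction for the second case: `{a}` is not a part, so removing `a` from its part. -/
def E2toQ (P : Finpartition (Finset.cons a t ha)) (hP : {a} ∉ P.parts) :
    Finpartition t := by
  have hamem : a ∈ Finset.cons a t ha := mem_cons_self a t
  set B := P.part a with hBdef
  have hB : B ∈ P.parts := P.part_mem.mpr hamem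
  have haB : a ∈ B := P.mem_part hamem
  refine mkPart t (insert (B.erase a) (P.parts.erase B)) ?_ ?_ ?_
  · rw [coe_insert]
    refine (P.disjoint.subset (by exact_mod_cast erase_subset _ _)).insert fun D hD hne => ?_
    have hD' := mem_erase.mp hD
    exact (P.disjoint hB hD'.2 (Ne.symm hD'.1)).mono_left (erase_subset _ _)
  · intro x
    constructor
    · intro hx
      obtain ⟨D, hD, hxD⟩ := P.exists_mem (mem_cons.mpr (Or.inr hx))
      by_cases hDB : D = B
      · exact ⟨B.erase a, mem_insert_self _ _,
          mem_erase.mpr ⟨fun hxa => ha (hxa ▸ hx), hDB ▸ hxD⟩⟩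
      · exact ⟨D, mem_insert_of_mem (mem_erase.mpr ⟨hDB, hD⟩), hxD⟩
    · rintro ⟨D, hD, hxD⟩
      rcases mem_insert.mp hD with rfl | hD'
      · have := mem_erase.mp hxD
        rcases mem_cons.mp (P.le hB this.2) with rfl | h
        · exact absurd rfl this.1
        · exact h
      · have hD'' := mem_erase.mp hD'
        rcases mem_cons.mp (P.le hD''.2 hxD) with rfl | h
        · exact absurd (P.eq_of_mem_parts hD''.2 hB hxD haB) hD''.1
        · exact h
  · intro h
    rcases mem_insert.mp h with h | h
    · -- ∅ = B.erase a : but B ≠ {a} and a ∈ B so B.erase a ≠ ∅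
      have hBne : B ≠ {a} := fun hEq => hP (hEq ▸ hB)
      have : ¬ B ⊆ {a} := fun hsub =>
        hBne (Finset.Subset.antisymm hsub (singleton_subset_iff.mpr haB))
      obtain ⟨x, hxB, hxa⟩ := not_subset.mp this
      rw [mem_singleton] at hxa
      have : x ∈ B.erase a := mem_erase.mpr ⟨hxa, hxB⟩
      rw [← h] at this
      exact absurd this (notMem_empty x)
    · exact P.bot_notMem (mem_erase.mp h).2

lemma E2toQ_parts (P : Finpartition (Finset.cons a t ha)) (hP : {a} ∉ P.parts) :
    (E2toQ ha P hP).parts = insert ((P.part a).erase a) (P.parts.erase (P.part a)) := rfl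

/-- Building P from Q and a chosen part C. -/
def E2toP (Q : Finpartition t) (C : Finset V) (hC : C ∈ Q.parts) :
    Finpartition (Finset.cons a t ha) := by
  have hCt : C ⊆ t := Q.le hC
  have haC : a ∉ C := fun h => ha (hCt h)
  refine mkPart _ (insert (insert a C) (Q.parts.erase C)) ?_ ?_ ?_
  · rw [coe_insert]
    refine (Q.disjoint.subset (by exact_mod_cast erase_subset _ _)).insert fun D hD hne => ?_
    have hD' := mem_erase.mp hD
    have h1 : Disjoint C D := Q.disjoint hC hD'.2 (Ne.symm hD'.1)
    simp only [id]
    rw [Finset.disjoint_insert_left]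
    exact ⟨fun h => ha (Q.le hD'.2 h), h1⟩
  · intro x
    constructor
    · intro hx
      rcases mem_cons.mp hx with rfl | h
      · exact ⟨insert x C, mem_insert_self _ _, mem_insert_self _ _⟩
      · obtain ⟨D, hD, hxD⟩ := Q.exists_mem h
        by_cases hDC : D = C
        · exact ⟨insert a C, mem_insert_self _ _, mem_insert_of_mem (hDC ▸ hxD)⟩
        · exact ⟨D, mem_insert_of_mem (mem_erase.mpr ⟨hDC, hD⟩), hxD⟩
    · rintro ⟨D, hD, hxD⟩
      rcases mem_insert.mp hD with rfl | hD'
      · rcases mem_insert.mp hxD with rfl | h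
        · exact mem_cons_self _ _
        · exact mem_cons.mpr (Or.inr (hCt h))
      · exact mem_cons.mpr (Or.inr (Q.le (mem_erase.mp hD').2 hxD))
  · intro h
    rcases mem_insert.mp h with h | h
    · exact (insert_ne_empty a C) h.symm
    · exact Q.bot_notMem (mem_erase.mp h).2

lemma E2toP_parts (Q : Finpartition t) (C : Finset V) (hC : C ∈ Q.parts) :
    (E2toP ha Q C hC).parts = insert (insert a C) (Q.parts.erase C) := rfl
end E2

section E2b
variable {V : Type*} [DecidableEq V] {a : V} {t : Finset V} (ha : a ∉ t) (k : ℕ)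

lemma erase_part_not_mem (P : Finpartition (Finset.cons a t ha)) :
    (P.part a).erase a ∉ P.parts.erase (P.part a) := by
  intro h
  have h' := mem_erase.mp h
  obtain ⟨x, hx⟩ := P.nonempty_of_mem_parts h'.2
  exact h'.1 (P.eq_of_mem_parts h'.2 (P.part_mem.mpr (mem_cons_self a t)) hx
    (erase_subset _ _ hx))

include ha in
lemma insert_a_not_mem_erase (Q : Finpartition t) (C : Finset V) :
    insert a C ∉ Q.parts.erase C :=
  fun h => ha (Q.le (mem_erase.mp h).2 (mem_insert_self a C))

lemma E2toP_part_a (Q : Finpartition t) (C : Finset V) (hC : C ∈ Q.parts) :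
    (E2toP ha Q C hC).part a = insert a C :=
  Finpartition.part_eq_of_mem _
    (by rw [E2toP_parts]; exact mem_insert_self _ _) (mem_insert_self a C)

def E2 : {P : Finpartition (Finset.cons a t ha) // {a} ∉ P.parts ∧ P.parts.card = k + 1} ≃
    Σ Q : {Q : Finpartition t // Q.parts.card = k + 1}, {B : Finset V // B ∈ Q.1.parts} where
  toFun P := ⟨⟨E2toQ ha P.1 P.2.1, by
      rw [E2toQ_parts]
      rw [card_insert_of_notMem (erase_part_not_mem ha P.1),
        card_erase_of_mem (P.1.part_mem.mpr (mem_cons_self a t)), P.2.2]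
      omega⟩,
    ⟨(P.1.part a).erase a, by rw [E2toQ_parts]; exact mem_insert_self _ _⟩⟩
  invFun x := ⟨E2toP ha x.1.1 x.2.1 x.2.2, by
      have hCt : x.2.1 ⊆ t := x.1.1.le x.2.2
      constructor
      · rw [E2toP_parts]
        intro h
        rcases mem_insert.mp h with h | h
        · obtain ⟨y, hy⟩ := x.1.1.nonempty_of_mem_parts x.2.2
          have : y ∈ ({a} : Finset V) := h ▸ mem_insert_of_mem hy
          rw [mem_singleton] at this
          exact ha (hCt (this ▸ hy))
        · exact ha (x.1.1.le (mem_erase.mp h).2 (mem_singleton_self a))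
      · rw [E2toP_parts, card_insert_of_notMem (insert_a_not_mem_erase ha x.1.1 x.2.1),
          card_erase_of_mem x.2.2, x.1.2]
        omega⟩
  left_inv P := by
    apply Subtype.ext
    apply Finpartition.ext
    dsimp only
    rw [E2toP_parts, E2toQ_parts, erase_insert (erase_part_not_mem ha P.1),
      insert_erase (P.1.mem_part (mem_cons_self a t)),
      insert_erase (P.1.part_mem.mpr (mem_cons_self a t))]
  right_inv x := by
    have haC : a ∉ x.2.1 := fun h => ha (x.1.1.le x.2.2 h)
    apply Sigma.subtype_ext
    · apply Subtype.ext
      apply Finpartition.ext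
      dsimp only
      rw [E2toQ_parts, E2toP_part_a, erase_insert haC, E2toP_parts,
        erase_insert (insert_a_not_mem_erase ha x.1.1 x.2.1), insert_erase x.2.2]
    · show ((E2toP ha x.1.1 x.2.1 x.2.2).part a).erase a = x.2.1
      rw [E2toP_part_a, erase_insert haC]

end E2b

lemma count_split' (α : Type*) [Finite α] (p q : α → Prop) :
    Nat.card {x // q x} = Nat.card {x // p x ∧ q x} + Nat.card {x // ¬ p x ∧ q x} := by
  classical
  rw [← Nat.card_sum]
  exact Nat.card_congr <|
    (Equiv.sumCompl (fun x : {x // q x} => p x.1)).symm.trans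
      (Equiv.sumCongr
        ((Equiv.subtypeSubtypeEquivSubtypeInter q p).trans
          (Equiv.subtypeEquivRight (fun x => and_comm)))
        ((Equiv.subtypeSubtypeEquivSubtypeInter q (fun x => ¬ p x)).trans
          (Equiv.subtypeEquivRight (fun x => and_comm))))

lemma card_partitions {V : Type*} [DecidableEq V] (s : Finset V) (k : ℕ) :
    Nat.card {P : Finpartition s // P.parts.card = k} = stirling2 s.card k := by
  induction s using Finset.cons_induction generalizing k with
  | empty =>
    have hparts : ∀ P : Finpartition (∅ : Finset V), P.parts = ∅ := fun P =>
      Finpartition.parts_eq_empty_iff.mpr Finset.bot_eq_empty.symm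
    cases k with
    | zero =>
      rw [show Finset.card ∅ = 0 from rfl, show stirling2 0 0 = 1 from rfl]
      rw [Nat.card_eq_one_iff_unique]
      refine ⟨⟨fun P Q => Subtype.ext (Finpartition.ext (by rw [hparts, hparts]))⟩,
        ⟨⟨⊥, by rw [hparts]; rfl⟩⟩⟩
    | succ k =>
      haveI : IsEmpty {P : Finpartition (∅ : Finset V) // P.parts.card = k + 1} :=
        ⟨fun P => by have := P.2; rw [hparts] at this; simp at this⟩
      rw [Nat.card_of_isEmpty]
      rfl
  | cons a t ha ih =>
    rw [card_cons]
    cases k with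
    | zero =>
      haveI : IsEmpty {P : Finpartition (Finset.cons a t ha) // P.parts.card = 0} := by
        refine ⟨fun P => ?_⟩
        have h := Finset.card_eq_zero.mp P.2
        rw [Finpartition.parts_eq_empty_iff] at h
        exact Finset.cons_nonempty ha |>.ne_empty (by rw [← Finset.bot_eq_empty, h])
      rw [Nat.card_of_isEmpty]
      rfl
    | succ k =>
      letI instF : ∀ Q : {Q : Finpartition t // Q.parts.card = k + 1},
          Fintype {B : Finset V // B ∈ Q.1.parts} := fun Q => FinsetCoe.fintype _
      have hsig : Nat.card (Σ Q : {Q : Finpartition t // Q.parts.card = k + 1},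
          {B : Finset V // B ∈ Q.1.parts}) =
          (k + 1) * Nat.card {Q : Finpartition t // Q.parts.card = k + 1} := by
        rw [Nat.card_eq_fintype_card, Fintype.card_sigma, Nat.card_eq_fintype_card]
        have hc : ∀ Q : {Q : Finpartition t // Q.parts.card = k + 1},
            Fintype.card {B : Finset V // B ∈ Q.1.parts} = k + 1 := fun Q => by
          rw [Fintype.card_coe]; exact Q.2
        rw [Finset.sum_congr rfl (fun Q _ => hc Q), Finset.sum_const, Finset.card_univ,
          smul_eq_mul, mul_comm]
      rw [count_split' (Finpartition (Finset.cons a t ha))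
          (fun P => {a} ∈ P.parts) (fun P => P.parts.card = k + 1),
        Nat.card_congr (E1 ha k), Nat.card_congr (E2 ha k), hsig, ih, ih]
      show stirling2 t.card k + (k + 1) * stirling2 t.card (k + 1) = stirling2 (t.card + 1) (k + 1)
      rw [show stirling2 (t.card + 1) (k + 1) =
        (k + 1) * stirling2 t.card (k + 1) + stirling2 t.card k from rfl]
      omega

open Finset

section Graph
variable {V : Type*} [DecidableEq V] (c : V) (L : Finset V)

def starGraph : SimpleGraph V :=
  (⊤ : SimpleGraph V).deleteEdges {e | ∃ x ∈ L, e = s(c, x)}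

lemma starGraph_adj (hc : c ∉ L) (u v : V) :
    (starGraph c L).Adj u v ↔ u ≠ v ∧ ¬(u = c ∧ v ∈ L) ∧ ¬(v = c ∧ u ∈ L) := by
  simp only [starGraph, SimpleGraph.deleteEdges_adj, SimpleGraph.top_adj, Set.mem_setOf_eq]
  constructor
  · rintro ⟨hne, h⟩
    refine ⟨hne, fun ⟨rfl, hv⟩ => h ⟨v, hv, rfl⟩, fun ⟨rfl, hu⟩ => h ⟨u, hu, Sym2.eq_swap⟩⟩
  · rintro ⟨hne, h1, h2⟩
    refine ⟨hne, fun ⟨x, hx, hew⟩ => ?_⟩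
    rw [Sym2.eq_iff] at hew
    rcases hew with ⟨rfl, rfl⟩ | ⟨rfl, rfl⟩
    · exact h1 ⟨rfl, hx⟩
    · exact h2 ⟨rfl, hx⟩

/-- connectivity characterization of a block -/
lemma starGraph_block_connected_iff (hc : c ∉ L) (B : Finset V) (hB : B.Nonempty) :
    ((starGraph c L).induce (B : Set V)).Connected ↔
      ¬(c ∈ B ∧ B ⊆ insert c L ∧ B ≠ {c}) := by
  constructor
  · rintro hconn ⟨hcB, hBL, hBne⟩
    -- pick v ∈ B, v ≠ c
    have : ¬ B ⊆ {c} := fun hsub => hBne (Finset.Subset.antisymm hsub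
      (singleton_subset_iff.mpr hcB))
    obtain ⟨v, hvB, hvc⟩ := not_subset.mp this
    rw [mem_singleton] at hvc
    have hvL : v ∈ L := by
      have := hBL hvB
      rw [mem_insert] at this
      tauto
    -- c has no neighbors in the induced graph
    have hreach := hconn.preconnected ⟨c, by exact_mod_cast hcB⟩ ⟨v, by exact_mod_cast hvB⟩
    obtain ⟨w⟩ := hreach
    have hne : (⟨c, by exact_mod_cast hcB⟩ : (B : Set V)) ≠ ⟨v, by exact_mod_cast hvB⟩ :=
      fun h => hvc (congrArg Subtype.val h).symm
    obtain ⟨u, hadj0, q, hw⟩ :=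
      (SimpleGraph.Walk.not_nil_iff (p := w)).mp (SimpleGraph.Walk.not_nil_of_ne hne)
    have hadj : (starGraph c L).Adj c u.1 := hadj0
    rw [starGraph_adj c L hc] at hadj
    have huB : u.1 ∈ B := by exact_mod_cast u.2
    have huL : u.1 = c ∨ u.1 ∈ L := by
      have := hBL huB
      rw [mem_insert] at this
      tauto
    rcases huL with h' | h'
    · exact hadj.1 h'.symm
    · exact hadj.2.1 ⟨rfl, h'⟩
  · intro hbad
    rw [SimpleGraph.connected_iff]
    refine ⟨?_, by obtain ⟨x, hx⟩ := hB; exact ⟨⟨x, by exact_mod_cast hx⟩⟩⟩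
    by_cases hcB : c ∈ B
    · by_cases hBc : B = {c}
      · subst hBc
        intro x y
        have : x = y := Subtype.ext (by
          have hx := x.2; have hy := y.2
          simp only [coe_singleton, Set.mem_singleton_iff] at hx hy
          rw [hx, hy])
        rw [this]
      · -- there is v ∈ B with v ∉ insert c L
        have hsub : ¬ B ⊆ insert c L := fun h => hbad ⟨hcB, h, hBc⟩
        obtain ⟨v, hvB, hv⟩ := not_subset.mp hsub
        rw [mem_insert, not_or] at hv
        have key : ∀ x : (B : Set V), ((starGraph c L).induce (B : Set V)).Reachable x
            ⟨v, by exact_mod_cast hvB⟩ := by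
          intro x
          by_cases hxv : x.1 = v
          · have : x = ⟨v, by exact_mod_cast hvB⟩ := Subtype.ext hxv
            rw [this]
          · refine SimpleGraph.Adj.reachable ?_
            show (starGraph c L).Adj x.1 v
            rw [starGraph_adj c L hc]
            exact ⟨hxv, fun h => hv.2 h.2, fun h => hv.1 h.1⟩
        intro x y
        exact (key x).trans (key y).symm
    · -- complete on B
      intro x y
      by_cases hxy : x = y
      · rw [hxy]
      · refine SimpleGraph.Adj.reachable ?_
        show (starGraph c L).Adj x.1 y.1
        rw [starGraph_adj c L hc]
        have hx : x.1 ∈ B := by exact_mod_cast x.2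
        have hy : y.1 ∈ B := by exact_mod_cast y.2
        refine ⟨fun h => hxy (Subtype.ext h), fun ⟨h1, _⟩ => hcB (h1 ▸ hx),
          fun ⟨h1, _⟩ => hcB (h1 ▸ hy)⟩
end Graph

section Bad
variable {V : Type*} [Fintype V] [DecidableEq V] (c : V) (L : Finset V)

/-- the bad condition on a partition -/
def BadP (P : Finpartition (Finset.univ : Finset V)) : Prop :=
  P.part c ⊆ insert c L ∧ P.part c ≠ {c}


def E3toP (S : Finset V) (hc' : c ∉ S)
    (Q : Finpartition (Finset.univ \ insert c S)) : Finpartition (Finset.univ : Finset V) := by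
  have hsub : ∀ D ∈ Q.parts, D ⊆ Finset.univ \ insert c S := fun D hD => Q.le hD
  refine mkPart Finset.univ (insert (insert c S) Q.parts) ?_ ?_ ?_
  · rw [coe_insert]
    refine Q.disjoint.insert fun D hD hne => ?_
    rw [Finset.disjoint_left]
    intro x hx hxD
    have := hsub D hD hxD
    rw [mem_sdiff] at this
    exact this.2 hx
  · intro x
    simp only [iff_true_intro (mem_univ x), true_iff]
    by_cases hx : x ∈ insert c S
    · exact ⟨insert c S, mem_insert_self _ _, hx⟩
    · obtain ⟨D, hD, hxD⟩ := Q.exists_mem (mem_sdiff.mpr ⟨mem_univ x, hx⟩)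
      exact ⟨D, mem_insert_of_mem hD, hxD⟩
  · intro h
    rcases mem_insert.mp h with h | h
    · exact (insert_ne_empty c S) h.symm
    · exact Q.bot_notMem h

lemma E3toP_parts (S : Finset V) (hc' : c ∉ S) (Q : Finpartition (Finset.univ \ insert c S)) :
    (E3toP c S hc' Q).parts = insert (insert c S) Q.parts := rfl

lemma insert_cS_not_mem (S : Finset V) (Q : Finpartition (Finset.univ \ insert c S)) :
    insert c S ∉ Q.parts := fun h => by
  have := Q.le h (mem_insert_self c S)
  rw [mem_sdiff] at this
  exact this.2 (mem_insert_self c S)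

lemma E3toP_part_c (S : Finset V) (hc' : c ∉ S) (Q : Finpartition (Finset.univ \ insert c S)) :
    (E3toP c S hc' Q).part c = insert c S :=
  Finpartition.part_eq_of_mem _ (by rw [E3toP_parts]; exact mem_insert_self _ _)
    (mem_insert_self c S)

/-- Equivalence between bad partitions with prescribed leaf-set `S` and partitions of the
complement. -/
def E3 (S : Finset V) (hS1 : S ⊆ L) (hS2 : S.Nonempty) (hc : c ∉ L) (m : ℕ) :
    {P : Finpartition (Finset.univ : Finset V) //
        (BadP c L P ∧ P.parts.card = m + 1) ∧ (P.part c).erase c = S} ≃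
    {Q : Finpartition (Finset.univ \ insert c S) // Q.parts.card = m} where
  toFun P := by
    have hcP : c ∈ P.1.part c := P.1.mem_part (mem_univ c)
    have hPmem : P.1.part c ∈ P.1.parts := P.1.part_mem.mpr (mem_univ c)
    have hPS : P.1.part c = insert c S := by
      conv_lhs => rw [← insert_erase hcP]
      rw [P.2.2]
    refine ⟨mkPart _ (P.1.parts.erase (P.1.part c))
      (P.1.disjoint.subset (by exact_mod_cast erase_subset _ _)) ?_
      (fun h => P.1.bot_notMem (mem_erase.mp h).2), ?_⟩
    · intro x
      rw [mem_sdiff, ← hPS]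
      constructor
      · rintro ⟨-, hx⟩
        obtain ⟨D, hD, hxD⟩ := P.1.exists_mem (mem_univ x)
        exact ⟨D, mem_erase.mpr ⟨fun h => hx (h ▸ hxD), hD⟩, hxD⟩
      · rintro ⟨D, hD, hxD⟩
        have hD' := mem_erase.mp hD
        refine ⟨mem_univ x, fun hx => hD'.1 (P.1.eq_of_mem_parts hD'.2 hPmem hxD hx)⟩
    · simp only [mkPart_parts]
      rw [card_erase_of_mem hPmem, P.2.1.2]
      omega
  invFun Q := by
    have hcS : c ∉ S := fun h => hc (hS1 h)
    refine ⟨E3toP c S hcS Q.1, ⟨⟨?_, ?_⟩, ?_⟩, ?_⟩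
    · rw [E3toP_part_c]
      exact insert_subset_insert c hS1
    · rw [E3toP_part_c]
      intro h
      obtain ⟨x, hx⟩ := hS2
      have hx2 : x ∈ ({c} : Finset V) := h ▸ mem_insert_of_mem hx
      rw [mem_singleton] at hx2
      exact hcS (hx2 ▸ hx)
    · rw [E3toP_parts, card_insert_of_notMem (insert_cS_not_mem c S Q.1), Q.2]
    · rw [E3toP_part_c]
      exact erase_insert hcS
  left_inv P := by
    apply Subtype.ext
    apply Finpartition.ext
    dsimp only
    rw [E3toP_parts]
    simp only [mkPart_parts]
    have hcP : c ∈ P.1.part c := P.1.mem_part (mem_univ c)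
    have hPS : insert c S = P.1.part c := by
      conv_rhs => rw [← insert_erase hcP]
      rw [P.2.2]
    rw [hPS, insert_erase (P.1.part_mem.mpr (mem_univ c))]
  right_inv Q := by
    have hcS : c ∉ S := fun h => hc (hS1 h)
    apply Subtype.ext
    apply Finpartition.ext
    dsimp only
    simp only [mkPart_parts]
    rw [E3toP_part_c, E3toP_parts, erase_insert (insert_cS_not_mem c S Q.1)]
end Bad

section Assemble
variable {V : Type*} [Fintype V] [DecidableEq V]

lemma isComposition_iff_not_bad (c : V) (L : Finset V) (hc : c ∉ L)
    (P : Finpartition (Finset.univ : Finset V)) :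
    (starGraph c L).IsComposition P ↔ ¬ BadP c L P := by
  constructor
  · intro h hbad
    have hmem := P.part_mem.mpr (mem_univ c)
    have hconn := h _ hmem
    rw [starGraph_block_connected_iff c L hc _ (P.nonempty_of_mem_parts hmem)] at hconn
    exact hconn ⟨P.mem_part (mem_univ c), hbad.1, hbad.2⟩
  · intro h B hB
    rw [starGraph_block_connected_iff c L hc _ (P.nonempty_of_mem_parts hB)]
    rintro ⟨hcB, h1, h2⟩
    have hBc : P.part c = B := P.part_eq_of_mem hB hcB
    exact h ⟨hBc ▸ h1, hBc ▸ h2⟩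

lemma card_bad (c : V) (L : Finset V) (hc : c ∉ L) (m : ℕ) :
    Nat.card {P : Finpartition (Finset.univ : Finset V) //
        BadP c L P ∧ P.parts.card = m + 1} =
      ∑ j ∈ Finset.Icc 1 L.card, L.card.choose j * stirling2 (Fintype.card V - j - 1) m := by
  classical
  set T := L.powerset.filter (·.Nonempty) with hT
  rw [Nat.card_eq_fintype_card, Fintype.card_subtype]
  rw [card_eq_sum_card_fiberwise (f := fun P => (P.part c).erase c) (t := T) ?hmaps]
  case hmaps =>
    intro P hP
    rw [mem_coe, mem_filter] at hP
    obtain ⟨⟨hsub, hne⟩, -⟩ := hP.2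
    rw [hT, mem_coe, mem_filter, mem_powerset]
    constructor
    · intro x hx
      have hx' := mem_erase.mp hx
      have := hsub hx'.2
      rw [mem_insert] at this
      tauto
    · have hcP : c ∈ P.part c := P.mem_part (mem_univ c)
      have : ¬ P.part c ⊆ {c} := fun hs => hne (Finset.Subset.antisymm hs
        (singleton_subset_iff.mpr hcP))
      obtain ⟨x, hxP, hxc⟩ := not_subset.mp this
      rw [mem_singleton] at hxc
      exact ⟨x, mem_erase.mpr ⟨hxc, hxP⟩⟩
  have hfib : ∀ S ∈ T, #((Finset.univ.filter fun P : Finpartition (Finset.univ : Finset V) =>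
      BadP c L P ∧ P.parts.card = m + 1).filter fun P => (P.part c).erase c = S) =
      stirling2 (Fintype.card V - S.card - 1) m := by
    intro S hS
    rw [hT, mem_filter, mem_powerset] at hS
    rw [filter_filter, ← Fintype.card_subtype, ← Nat.card_eq_fintype_card,
      Nat.card_congr (E3 c L S hS.1 hS.2 hc m), card_partitions]
    congr 1
    have hcS : c ∉ S := fun h => hc (hS.1 h)
    rw [card_sdiff_of_subset (subset_univ _), card_insert_of_notMem hcS, card_univ, Nat.sub_sub]
  rw [Finset.sum_congr rfl hfib]
  rw [← Finset.sum_fiberwise_of_maps_to (g := Finset.card) (t := Finset.Icc 1 L.card) ?hm2]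
  case hm2 =>
    intro S hS
    rw [hT, mem_filter, mem_powerset] at hS
    rw [mem_Icc]
    exact ⟨card_pos.mpr hS.2, card_le_card hS.1⟩
  refine Finset.sum_congr rfl fun j hj => ?_
  rw [mem_Icc] at hj
  have hTj : T.filter (fun S => S.card = j) = L.powersetCard j := by
    ext S
    rw [mem_filter, hT, mem_filter, mem_powerset, mem_powersetCard]
    constructor
    · rintro ⟨⟨h1, -⟩, h2⟩; exact ⟨h1, h2⟩
    · rintro ⟨h1, h2⟩
      exact ⟨⟨h1, card_pos.mp (by omega)⟩, h2⟩
  rw [hTj]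
  rw [Finset.sum_congr rfl (fun S hS => by
    rw [(mem_powersetCard.mp hS).2]), Finset.sum_const, card_powersetCard, smul_eq_mul]

theorem compCount_general (N n : ℕ) (hN : n + 1 ≤ N) (hVN : Fintype.card V = N)
    (c : V) (L : Finset V) (hc : c ∉ L) (hL : L.card = n) (k : ℕ) :
    (starGraph c L).compCount k =
      stirling2 N k -
        ∑ j ∈ Finset.Icc 1 n, n.choose j * stirling2 (N - j - 1) (k - 1) := by
  classical
  haveI : Nonempty V := Fintype.card_pos_iff.mp (by omega)
  rw [SimpleGraph.compCount]
  cases k with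
  | zero =>
    have hst : stirling2 N 0 = 0 := by
      obtain ⟨m, rfl⟩ : ∃ m, N = m + 1 := ⟨N - 1, by omega⟩
      rfl
    haveI : IsEmpty {P : Finpartition (Finset.univ : Finset V) //
        (starGraph c L).IsComposition P ∧ P.parts.card = 0} := by
      refine ⟨fun P => ?_⟩
      have h := Finset.card_eq_zero.mp P.2.2
      rw [Finpartition.parts_eq_empty_iff] at h
      exact (Finset.univ_nonempty).ne_empty (by rw [← Finset.bot_eq_empty, h])
    rw [Nat.card_of_isEmpty, hst, Nat.zero_sub]
  | succ m =>
    have hsplit := count_split' (Finpartition (Finset.univ : Finset V)) (BadP c L)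
      (fun P => P.parts.card = m + 1)
    rw [card_partitions, card_univ, hVN] at hsplit
    have hbad := card_bad c L hc m
    rw [hL, hVN] at hbad
    have hgood : Nat.card {P : Finpartition (Finset.univ : Finset V) //
        (starGraph c L).IsComposition P ∧ P.parts.card = m + 1} =
        Nat.card {P : Finpartition (Finset.univ : Finset V) //
        ¬ BadP c L P ∧ P.parts.card = m + 1} :=
      Nat.card_congr (Equiv.subtypeEquivRight fun P =>
        and_congr_left' (isComposition_iff_not_bad c L hc P))
    rw [hgood, Nat.succ_sub_one]
    omega
end Assemble

theorem compCount_complete_minus_star (N n : ℕ) (hN : n + 1 ≤ N)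
    (c : Fin N) (L : Finset (Fin N)) (hc : c ∉ L) (hL : L.card = n) (k : ℕ) :
    ((⊤ : SimpleGraph (Fin N)).deleteEdges {e | ∃ x ∈ L, e = s(c, x)}).compCount k =
      stirling2 N k -
        ∑ j ∈ Finset.Icc 1 n, n.choose j * stirling2 (N - j - 1) (k - 1) := by
  have hG : ((⊤ : SimpleGraph (Fin N)).deleteEdges {e | ∃ x ∈ L, e = s(c, x)}) =
      starGraph c L := rfl
  rw [hG]
  exact compCount_general N n hN (Fintype.card_fin N) c L hc hL k
end

section
/- Let p_{j,m,n} denote the number of ways of choosing m pairwise vertex-disjoint bad components of K_N^{-P_n} (each bad component being either a single edge of P_n or a subpath of P_n with 2 edges) such that the total number of vertices used is j. Then for j ≥ 3, m ≥ 1, n ≥ 3: p_{j,m,n} = p_{j,m,n-1} + p_{j-2,m-1,n-2} + p_{j-3,m-1,n-3}. -/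
/-- The vertex sets of the *bad components* of `K_N^{-P_n}`, where the path `P_n`
has vertices `0, 1, …, n-1`: vertex sets of single edges of the path and of
subpaths with 3 vertices. -/
def pathBadSets (n : ℕ) : Set (Finset ℕ) :=
  {s | (∃ i, i + 2 ≤ n ∧ s = {i, i + 1}) ∨ (∃ i, i + 3 ≤ n ∧ s = {i, i + 1, i + 2})}

/-- `pathBadCount j m n` (the `p_{j,m,n}` of the paper): the number of ways of
choosing `m` pairwise disjoint bad components of `K_N^{-P_n}` such that the
total number of vertices used is `j`. -/
noncomputable def pathBadCount (j m n : ℕ) : ℕ :=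
  Nat.card {A : Finset (Finset ℕ) // ↑A ⊆ pathBadSets n ∧ A.card = m ∧
    (A : Set (Finset ℕ)).Pairwise (fun s t => Disjoint s t) ∧
    (A.biUnion id).card = j}

namespace PBAux

def pbSet (j m n : ℕ) : Set (Finset (Finset ℕ)) :=
  {A | ↑A ⊆ pathBadSets n ∧ A.card = m ∧
    (A : Set (Finset ℕ)).Pairwise (fun s t => Disjoint s t) ∧ (A.biUnion id).card = j}

lemma count_eq (j m n : ℕ) : pathBadCount j m n = (pbSet j m n).ncard := by
  rw [pathBadCount, ← Nat.card_coe_set_eq]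
  rfl

lemma subset_range {n : ℕ} {s : Finset ℕ} (hs : s ∈ pathBadSets n) : s ⊆ Finset.range n := by
  rcases hs with ⟨i, hi, rfl⟩ | ⟨i, hi, rfl⟩ <;> intro x hx <;>
    simp only [Finset.mem_insert, Finset.mem_singleton] at hx <;>
    simp only [Finset.mem_range] <;> omega

lemma pbs_nonempty {n : ℕ} {s : Finset ℕ} (hs : s ∈ pathBadSets n) : s.Nonempty := by
  rcases hs with ⟨i, _, rfl⟩ | ⟨i, _, rfl⟩ <;> exact ⟨i, by simp⟩

lemma mono {a b : ℕ} (h : a ≤ b) : pathBadSets a ⊆ pathBadSets b := by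
  rintro s (⟨i, hi, rfl⟩ | ⟨i, hi, rfl⟩)
  · exact Or.inl ⟨i, by omega, rfl⟩
  · exact Or.inr ⟨i, by omega, rfl⟩

lemma drop {n : ℕ} {s : Finset ℕ} (hs : s ∈ pathBadSets (n+1)) (h : n ∉ s) :
    s ∈ pathBadSets n := by
  rcases hs with ⟨i, hi, rfl⟩ | ⟨i, hi, rfl⟩
  · refine Or.inl ⟨i, ?_, rfl⟩
    simp only [Finset.mem_insert, Finset.mem_singleton] at h
    omega
  · refine Or.inr ⟨i, ?_, rfl⟩
    simp only [Finset.mem_insert, Finset.mem_singleton] at h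
    omega

lemma top {k : ℕ} {s : Finset ℕ} (hs : s ∈ pathBadSets (k+3)) (h : k+2 ∈ s) :
    s = {k+1, k+2} ∨ s = {k, k+1, k+2} := by
  rcases hs with ⟨i, hi, rfl⟩ | ⟨i, hi, rfl⟩
  · simp only [Finset.mem_insert, Finset.mem_singleton] at h
    left
    have : i = k+1 := by omega
    subst this; rfl
  · simp only [Finset.mem_insert, Finset.mem_singleton] at h
    right
    have : i = k := by omega
    subst this; rfl

lemma pbSet_finite (j m n : ℕ) : (pbSet j m n).Finite := by
  apply Set.Finite.subset (((Finset.range n).powerset.powerset).finite_toSet)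
  intro A hA
  simp only [Finset.coe_powerset, Set.mem_preimage, Set.mem_powerset_iff] at *
  intro s hs
  simp only [Finset.coe_powerset, Set.mem_preimage, Set.mem_powerset_iff]
  exact Finset.coe_subset.mpr (subset_range (hA.1 hs))

lemma mem_insert_pb {j' m' n' n : ℕ} {s₀ : Finset ℕ} {A' : Finset (Finset ℕ)}
    (hs₀ : s₀ ∈ pathBadSets n) (hn' : n' ≤ n) (hlb : ∀ x ∈ s₀, n' ≤ x)
    (hA' : A' ∈ pbSet j' m' n') :
    insert s₀ A' ∈ pbSet (j' + s₀.card) (m' + 1) n := by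
  obtain ⟨h1, h2, h3, h4⟩ := hA'
  have hsub : ∀ t ∈ A', t ⊆ Finset.range n' := fun t ht => subset_range (h1 ht)
  have hdis : ∀ t ∈ A', Disjoint s₀ t := by
    intro t ht
    rw [Finset.disjoint_left]
    intro a ha hat
    have h1 := Finset.mem_range.mp (hsub t ht hat)
    have h2 := hlb a ha
    omega
  have hs₀A : s₀ ∉ A' := by
    intro hmem
    obtain ⟨x, hx⟩ := pbs_nonempty hs₀
    have h1 := Finset.mem_range.mp (hsub _ hmem hx)
    have h2 := hlb x hx
    omega
  refine ⟨?_, ?_, ?_, ?_⟩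
  · rw [Finset.coe_insert]
    exact Set.insert_subset hs₀ (h1.trans (mono hn'))
  · rw [Finset.card_insert_of_notMem hs₀A, h2]
  · rw [Finset.coe_insert]
    refine (Set.pairwise_insert).2 ⟨h3, fun b hb _ => ⟨hdis b hb, (hdis b hb).symm⟩⟩
  · rw [Finset.biUnion_insert]
    have : Disjoint (id s₀) (A'.biUnion id) := by
      rw [Finset.disjoint_biUnion_right]
      exact hdis
    rw [Finset.card_union_of_disjoint this, h4, id_eq]
    omega

lemma erase_pb {j m n n' : ℕ} {s₀ : Finset ℕ} {A : Finset (Finset ℕ)}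
    (hA : A ∈ pbSet j m n) (hs₀ : s₀ ∈ A)
    (hstep : ∀ t ∈ A, t ≠ s₀ → t ∈ pathBadSets n') :
    A.erase s₀ ∈ pbSet (j - s₀.card) (m - 1) n' := by
  obtain ⟨h1, h2, h3, h4⟩ := hA
  have hdis : Disjoint (id s₀) ((A.erase s₀).biUnion id) := by
    rw [Finset.disjoint_biUnion_right]
    intro t ht
    rw [Finset.mem_erase] at ht
    exact (h3 (Finset.mem_coe.mpr ht.2) (Finset.mem_coe.mpr hs₀) ht.1).symm
  have hbu : A.biUnion id = s₀ ∪ (A.erase s₀).biUnion id := by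
    conv_lhs => rw [← Finset.insert_erase hs₀]
    rw [Finset.biUnion_insert, id_eq]
  refine ⟨?_, ?_, ?_, ?_⟩
  · intro t ht
    rw [Finset.mem_coe, Finset.mem_erase] at ht
    exact hstep t ht.2 ht.1
  · rw [Finset.card_erase_of_mem hs₀, h2]
  · exact h3.mono (Finset.coe_subset.mpr (Finset.erase_subset _ _))
  · rw [hbu, Finset.card_union_of_disjoint (by simpa using hdis)] at h4
    omega

lemma injOn_insert {j' m' n' : ℕ} {s₀ : Finset ℕ} (hx : ∃ x ∈ s₀, n' ≤ x) :
    Set.InjOn (insert s₀) (pbSet j' m' n') := by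
  obtain ⟨x, hxs, hxn⟩ := hx
  have key : ∀ A ∈ pbSet j' m' n', s₀ ∉ A := by
    intro A hA hmem
    have := Finset.mem_range.mp (subset_range (hA.1 hmem) hxs)
    omega
  intro A hA B hB h
  rw [← Finset.erase_insert (key A hA), ← Finset.erase_insert (key B hB), h]

lemma card2 (k : ℕ) : ({k+1, k+2} : Finset ℕ).card = 2 := by
  rw [Finset.card_insert_of_notMem (by simp), Finset.card_singleton]

lemma card3 (k : ℕ) : ({k, k+1, k+2} : Finset ℕ).card = 3 := by
  rw [Finset.card_insert_of_notMem (by simp), card2]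

lemma split (j m k : ℕ) (hj : 3 ≤ j) (hm : 1 ≤ m) :
    pbSet j m (k+3) =
      pbSet j m (k+2) ∪ insert ({k+1,k+2} : Finset ℕ) '' pbSet (j-2) (m-1) (k+1)
        ∪ insert ({k,k+1,k+2} : Finset ℕ) '' pbSet (j-3) (m-1) k := by
  ext A
  constructor
  · intro hA
    by_cases h : ∃ s ∈ A, k+2 ∈ s
    · obtain ⟨s, hsA, hks⟩ := h
      have hdisj : ∀ t ∈ A, t ≠ s → Disjoint t s := fun t ht hne =>
        hA.2.2.1 (Finset.mem_coe.mpr ht) (Finset.mem_coe.mpr hsA) hne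
      rcases top (hA.1 hsA) hks with rfl | rfl
      · refine Or.inl (Or.inr ⟨A.erase _, ?_, Finset.insert_erase hsA⟩)
        have hstep : ∀ t ∈ A, t ≠ ({k+1,k+2} : Finset ℕ) → t ∈ pathBadSets (k+1) := by
          intro t ht hne
          have hd := hdisj t ht hne
          have h2 : k+2 ∉ t := fun hmem =>
            (Finset.disjoint_left.mp hd hmem) (by simp)
          have h1 : k+1 ∉ t := fun hmem =>
            (Finset.disjoint_left.mp hd hmem) (by simp)
          exact drop (drop (hA.1 ht) h2) h1
        have := erase_pb hA hsA hstep
        rwa [card2] at this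
      · refine Or.inr ⟨A.erase _, ?_, Finset.insert_erase hsA⟩
        have hstep : ∀ t ∈ A, t ≠ ({k,k+1,k+2} : Finset ℕ) → t ∈ pathBadSets k := by
          intro t ht hne
          have hd := hdisj t ht hne
          have h2 : k+2 ∉ t := fun hmem =>
            (Finset.disjoint_left.mp hd hmem) (by simp)
          have h1 : k+1 ∉ t := fun hmem =>
            (Finset.disjoint_left.mp hd hmem) (by simp)
          have h0 : k ∉ t := fun hmem =>
            (Finset.disjoint_left.mp hd hmem) (by simp)
          exact drop (drop (drop (hA.1 ht) h2) h1) h0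
        have := erase_pb hA hsA hstep
        rwa [card3] at this
    · push_neg at h
      refine Or.inl (Or.inl ⟨?_, hA.2.1, hA.2.2.1, hA.2.2.2⟩)
      intro t ht
      exact drop (hA.1 ht) (h t ht)
  · rintro ((hA | ⟨A', hA', rfl⟩) | ⟨A', hA', rfl⟩)
    · exact ⟨fun t ht => mono (by omega) (hA.1 ht), hA.2.1, hA.2.2.1, hA.2.2.2⟩
    · have hmem : ({k+1,k+2} : Finset ℕ) ∈ pathBadSets (k+3) :=
        Or.inl ⟨k+1, le_refl _, rfl⟩
      have hlb : ∀ x ∈ ({k+1,k+2} : Finset ℕ), k+1 ≤ x := by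
        intro x hx
        simp only [Finset.mem_insert, Finset.mem_singleton] at hx
        omega
      have := mem_insert_pb hmem (by omega) hlb hA'
      rw [card2] at this
      have e1 : j - 2 + 2 = j := by omega
      have e2 : m - 1 + 1 = m := by omega
      rwa [e1, e2] at this
    · have hmem : ({k,k+1,k+2} : Finset ℕ) ∈ pathBadSets (k+3) :=
        Or.inr ⟨k, le_refl _, rfl⟩
      have hlb : ∀ x ∈ ({k,k+1,k+2} : Finset ℕ), k ≤ x := by
        intro x hx
        simp only [Finset.mem_insert, Finset.mem_singleton] at hx
        omega
      have := mem_insert_pb hmem (by omega) hlb hA'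
      rw [card3] at this
      have e1 : j - 3 + 3 = j := by omega
      have e2 : m - 1 + 1 = m := by omega
      rwa [e1, e2] at this

lemma no_top_mem {j m n : ℕ} {A : Finset (Finset ℕ)} (hA : A ∈ pbSet j m n)
    {s : Finset ℕ} {x : ℕ} (hx : x ∈ s) (hxn : n ≤ x) : s ∉ A := by
  intro hmem
  have := Finset.mem_range.mp (subset_range (hA.1 hmem) hx)
  omega

end PBAux

theorem pathBadCount_recurrence (j m n : ℕ) (hj : 3 ≤ j) (hm : 1 ≤ m) (hn : 3 ≤ n) :
    pathBadCount j m n = pathBadCount j m (n - 1) +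
      pathBadCount (j - 2) (m - 1) (n - 2) + pathBadCount (j - 3) (m - 1) (n - 3) := by
  obtain ⟨k, rfl⟩ : ∃ k, n = k + 3 := ⟨n - 3, by omega⟩
  have e1 : k + 3 - 1 = k + 2 := by omega
  have e2 : k + 3 - 2 = k + 1 := by omega
  have e3 : k + 3 - 3 = k := by omega
  rw [e1, e2, e3]
  simp only [PBAux.count_eq]
  rw [PBAux.split j m k hj hm]
  set X := PBAux.pbSet j m (k+2)
  set Y := insert ({k+1,k+2} : Finset ℕ) '' PBAux.pbSet (j-2) (m-1) (k+1) with hY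
  set Z := insert ({k,k+1,k+2} : Finset ℕ) '' PBAux.pbSet (j-3) (m-1) k with hZ
  have finX : X.Finite := PBAux.pbSet_finite _ _ _
  have finY : Y.Finite := (PBAux.pbSet_finite _ _ _).image _
  have finZ : Z.Finite := (PBAux.pbSet_finite _ _ _).image _
  have dXY : Disjoint X Y := by
    rw [Set.disjoint_left]
    rintro A hAX ⟨A', hA', rfl⟩
    exact PBAux.no_top_mem hAX (show k+2 ∈ ({k+1,k+2} : Finset ℕ) by simp) (le_refl _)
      (Finset.mem_insert_self _ _)
  have dXZ : Disjoint X Z := by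
    rw [Set.disjoint_left]
    rintro A hAX ⟨A', hA', rfl⟩
    exact PBAux.no_top_mem hAX (show k+2 ∈ ({k,k+1,k+2} : Finset ℕ) by simp) (le_refl _)
      (Finset.mem_insert_self _ _)
  have dYZ : Disjoint Y Z := by
    rw [Set.disjoint_left]
    rintro A ⟨A', hA', rfl⟩ ⟨A'', hA'', hEq⟩
    have hmem : ({k,k+1,k+2} : Finset ℕ) ∈ insert ({k+1,k+2} : Finset ℕ) A' := by
      rw [← hEq]; exact Finset.mem_insert_self _ _
    rw [Finset.mem_insert] at hmem
    rcases hmem with h | h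
    · have : k ∈ ({k+1,k+2} : Finset ℕ) := by rw [← h]; simp
      simp only [Finset.mem_insert, Finset.mem_singleton] at this
      omega
    · exact PBAux.no_top_mem hA' (show k+2 ∈ ({k,k+1,k+2} : Finset ℕ) by simp) (by omega) h
  rw [Set.ncard_union_eq (Set.disjoint_union_left.mpr ⟨dXZ, dYZ⟩) (finX.union finY) finZ,
    Set.ncard_union_eq dXY finX finY,
    Set.ncard_image_of_injOn (PBAux.injOn_insert ⟨k+2, by simp, by omega⟩),
    Set.ncard_image_of_injOn (PBAux.injOn_insert ⟨k+2, by simp, by omega⟩)]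
end

section
/- The trivariate generating function F(x,y,z) = sum over n, m, j ≥ 0 of (−1)^m p_{j,m,n} x^n y^m z^j equals 1/(1 − x + x^2 y z^2 + x^3 y z^3), where p_{j,m,n} counts selections of m pairwise disjoint bad components of K_N^{-P_n} (single edges or 2-edge subpaths of the path P_n) using j vertices in total. -/
def Good (n m j : ℕ) (A : Finset (Finset ℕ)) : Prop :=
  ↑A ⊆ pathBadSets n ∧ A.card = m ∧
    (A : Set (Finset ℕ)).Pairwise (fun s t => Disjoint s t) ∧
    (A.biUnion id).card = j

lemma pathBadCount_eq (j m n : ℕ) :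
    pathBadCount j m n = {A | Good n m j A}.ncard := rfl

lemma card_pair' (i : ℕ) : ({i, i+1} : Finset ℕ).card = 2 := by
  rw [Finset.card_pair (by omega)]

lemma card_triple' (i : ℕ) : ({i, i+1, i+2} : Finset ℕ).card = 3 := by
  rw [Finset.card_insert_of_notMem (by simp), Finset.card_pair (by omega)]

lemma lt_of_mem_pathBadSets {s : Finset ℕ} {n x : ℕ} (hs : s ∈ pathBadSets n)
    (hx : x ∈ s) : x < n := by
  rcases hs with ⟨i, hi, rfl⟩ | ⟨i, hi, rfl⟩ <;> simp [Finset.mem_insert] at hx <;> omega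

lemma pathBadSets_mono {n n' : ℕ} (h : n ≤ n') : pathBadSets n ⊆ pathBadSets n' := by
  rintro s (⟨i, hi, rfl⟩ | ⟨i, hi, rfl⟩)
  · exact Or.inl ⟨i, by omega, rfl⟩
  · exact Or.inr ⟨i, by omega, rfl⟩

lemma pathBadSets_shrink {s : Finset ℕ} {n n' : ℕ} (hs : s ∈ pathBadSets n)
    (h : ∀ x ∈ s, x < n') : s ∈ pathBadSets n' := by
  rcases hs with ⟨i, hi, rfl⟩ | ⟨i, hi, rfl⟩
  · exact Or.inl ⟨i, by have := h (i+1) (by simp); omega, rfl⟩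
  · exact Or.inr ⟨i, by have := h (i+2) (by simp); omega, rfl⟩

lemma good_finite (n m j : ℕ) : {A | Good n m j A}.Finite := by
  apply Set.Finite.subset ((Finset.range n).powerset.powerset : Finset (Finset (Finset ℕ))).finite_toSet
  intro A hA
  simp only [Finset.mem_coe, Finset.mem_powerset]
  intro s hs
  simp only [Finset.mem_powerset]
  intro x hx
  exact Finset.mem_range.2 (lt_of_mem_pathBadSets (hA.1 hs) hx)

lemma pathBadCount_zero (j m : ℕ) :
    pathBadCount j m 0 = if m = 0 ∧ j = 0 then 1 else 0 := by
  rw [pathBadCount_eq]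
  have hempty : ∀ A : Finset (Finset ℕ), Good 0 m j A → A = ∅ := by
    intro A hA
    by_contra h
    obtain ⟨s, hs⟩ := Finset.nonempty_iff_ne_empty.2 h
    rcases hA.1 hs with ⟨i, hi, rfl⟩ | ⟨i, hi, rfl⟩ <;> omega
  by_cases h : m = 0 ∧ j = 0
  · obtain ⟨rfl, rfl⟩ := h
    rw [if_pos ⟨rfl, rfl⟩]
    have : {A | Good 0 0 0 A} = {∅} := by
      ext A
      constructor
      · exact fun hA => hempty A hA
      · rintro rfl
        refine ⟨by simp, rfl, by simp, by simp⟩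
    rw [this, Set.ncard_singleton]
  · rw [if_neg h]
    have : {A | Good 0 m j A} = ∅ := by
      ext A
      simp only [Set.mem_setOf_eq, Set.mem_empty_iff_false, iff_false]
      intro hA
      have := hempty A hA
      subst this
      obtain ⟨_, h2, _, h4⟩ := hA
      simp at h2 h4
      exact h ⟨h2.symm, h4.symm⟩
    rw [this, Set.ncard_empty]

lemma pair_eq {s : Finset ℕ} {k : ℕ} (hs : s ∈ pathBadSets (k+2))
    (hmem : k+1 ∈ s) (hcard : s.card = 2) : s = {k, k+1} := by
  rcases hs with ⟨i, hi, rfl⟩ | ⟨i, hi, rfl⟩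
  · simp only [Finset.mem_insert, Finset.mem_singleton] at hmem
    rcases hmem with h | h
    · omega
    · have : i = k := by omega
      subst this; rfl
  · rw [card_triple'] at hcard; omega

lemma triple_eq {s : Finset ℕ} {k : ℕ} (hs : s ∈ pathBadSets (k+3))
    (hmem : k+2 ∈ s) (hcard : s.card = 3) : s = {k, k+1, k+2} := by
  rcases hs with ⟨i, hi, rfl⟩ | ⟨i, hi, rfl⟩
  · rw [card_pair'] at hcard; omega
  · simp only [Finset.mem_insert, Finset.mem_singleton] at hmem
    have : i = k := by omega
    subst this; rfl

lemma ncard_extract (k m j c : ℕ) (hc : 1 ≤ c) (p : Finset ℕ)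
    (hp : p ∈ pathBadSets (k+c)) (hpc : p.card = c)
    (hpelts : ∀ x, x ∈ p ↔ k ≤ x ∧ x < k + c)
    (huniq : ∀ s ∈ pathBadSets (k+c), (k+c-1) ∈ s → s.card = c → s = p) :
    {A | Good (k+c) m j A ∧ ∃ s ∈ A, (k+c-1) ∈ s ∧ s.card = c}.ncard
      = if 1 ≤ m ∧ c ≤ j then pathBadCount (j-c) (m-1) k else 0 := by
  have hset : {A | Good (k+c) m j A ∧ ∃ s ∈ A, (k+c-1) ∈ s ∧ s.card = c}
      = {A | Good (k+c) m j A ∧ p ∈ A} := by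
    ext A
    simp only [Set.mem_setOf_eq, and_congr_right_iff]
    intro hA
    constructor
    · rintro ⟨s, hsA, hmem, hcard⟩
      rwa [← huniq s (hA.1 hsA) hmem hcard]
    · intro hpA
      exact ⟨p, hpA, (hpelts _).2 ⟨by omega, by omega⟩, hpc⟩
  rw [hset]
  by_cases hmj : 1 ≤ m ∧ c ≤ j
  swap
  · rw [if_neg hmj]
    have : {A | Good (k+c) m j A ∧ p ∈ A} = ∅ := by
      ext A
      simp only [Set.mem_setOf_eq, Set.mem_empty_iff_false, iff_false, not_and]
      intro hA hpA
      have hm : 1 ≤ m := hA.2.1 ▸ Finset.card_pos.2 ⟨p, hpA⟩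
      have hj : c ≤ j := by
        rw [← hA.2.2.2, ← hpc]
        exact Finset.card_le_card (Finset.subset_biUnion_of_mem id hpA)
      exact hmj ⟨hm, hj⟩
    rw [this, Set.ncard_empty]
  rw [if_pos hmj]
  obtain ⟨hm, hj⟩ := hmj
  -- bijection via erase p
  have hinj : Set.InjOn (fun A : Finset (Finset ℕ) => A.erase p)
      {A | Good (k+c) m j A ∧ p ∈ A} := by
    intro A hA B hB h
    simp only at h
    rw [← Finset.insert_erase hA.2, ← Finset.insert_erase hB.2, h]
  rw [← Set.ncard_image_of_injOn hinj]
  have himg : (fun A : Finset (Finset ℕ) => A.erase p) '' {A | Good (k+c) m j A ∧ p ∈ A}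
      = {B | Good k (m-1) (j-c) B} := by
    ext B
    simp only [Set.mem_image, Set.mem_setOf_eq]
    constructor
    · rintro ⟨A, ⟨⟨hsub, hcard, hpw, hbu⟩, hpA⟩, rfl⟩
      have hdisj : ∀ s ∈ A.erase p, Disjoint p s := by
        intro s hs
        exact (hpw (Finset.mem_coe.2 hpA) (Finset.mem_coe.2 (Finset.mem_of_mem_erase hs))
          (Ne.symm (Finset.ne_of_mem_erase hs)))
      refine ⟨?_, ?_, ?_, ?_⟩
      · intro s hs
        have hs' : s ∈ A.erase p := hs
        apply pathBadSets_shrink (hsub (Finset.mem_of_mem_erase hs'))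
        intro x hx
        have h1 : x < k + c := lt_of_mem_pathBadSets (hsub (Finset.mem_of_mem_erase hs')) hx
        have h2 : x ∉ p := Finset.disjoint_right.1 (hdisj s hs') hx
        rw [hpelts] at h2
        omega
      · rw [Finset.card_erase_of_mem hpA, hcard]
      · exact Set.Pairwise.mono (by simp [Finset.erase_subset]) hpw
      · have hA' : A = insert p (A.erase p) := (Finset.insert_erase hpA).symm
        have hd : Disjoint (id p) ((A.erase p).biUnion id) := by
          rw [Finset.disjoint_biUnion_right]
          exact fun s hs => hdisj s hs
        rw [hA', Finset.biUnion_insert, Finset.card_union_of_disjoint hd] at hbu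
        have : p.card + ((A.erase p).biUnion id).card = j := hbu
        omega
    · rintro ⟨hsub, hcard, hpw, hbu⟩
      have hlt : ∀ s ∈ B, ∀ x ∈ s, x < k := fun s hs x hx =>
        lt_of_mem_pathBadSets (hsub hs) hx
      have hpB : p ∉ B := by
        intro h
        have := hlt p h k ((hpelts k).2 ⟨le_refl _, by omega⟩)
        omega
      have hdisj : ∀ s ∈ B, Disjoint p s := by
        intro s hs
        rw [Finset.disjoint_left]
        intro x hxp hxs
        have := (hpelts x).1 hxp
        have := hlt s hs x hxs
        omega
      refine ⟨insert p B, ⟨⟨?_, ?_, ?_, ?_⟩, Finset.mem_insert_self _ _⟩, ?_⟩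
      · intro s hs
        rcases Finset.mem_insert.1 hs with rfl | hs'
        · exact hp
        · exact pathBadSets_mono (by omega) (hsub hs')
      · rw [Finset.card_insert_of_notMem hpB, hcard]; omega
      · rw [Finset.coe_insert]
        rw [Set.pairwise_insert_of_symmetric]
        exact ⟨hpw, fun s hs _ => hdisj s hs⟩
      · have hd : Disjoint (id p) (B.biUnion id) := by
          rw [Finset.disjoint_biUnion_right]
          exact fun s hs => hdisj s hs
        rw [Finset.biUnion_insert, Finset.card_union_of_disjoint hd, id_eq, hpc, hbu]
        omega
      · exact Finset.erase_insert hpB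
  rw [himg, pathBadCount_eq]

lemma card_of_mem_pathBadSets {s : Finset ℕ} {n : ℕ} (hs : s ∈ pathBadSets n) :
    s.card = 2 ∨ s.card = 3 := by
  rcases hs with ⟨i, _, rfl⟩ | ⟨i, _, rfl⟩
  · exact Or.inl (card_pair' i)
  · exact Or.inr (card_triple' i)

lemma ncard_pairCase (k m j : ℕ) :
    {A | Good (k+2) m j A ∧ ∃ s ∈ A, k+1 ∈ s ∧ s.card = 2}.ncard
      = if 1 ≤ m ∧ 2 ≤ j then pathBadCount (j-2) (m-1) k else 0 := by
  have := ncard_extract k m j 2 (by omega) {k, k+1}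
    (Or.inl ⟨k, le_refl _, rfl⟩) (card_pair' k)
    (fun x => by simp only [Finset.mem_insert, Finset.mem_singleton]; omega)
    (fun s hs hmem hcard => pair_eq hs hmem hcard)
  simpa using this

lemma ncard_tripleCase (k m j : ℕ) :
    {A | Good (k+3) m j A ∧ ∃ s ∈ A, k+2 ∈ s ∧ s.card = 3}.ncard
      = if 1 ≤ m ∧ 3 ≤ j then pathBadCount (j-3) (m-1) k else 0 := by
  have := ncard_extract k m j 3 (by omega) {k, k+1, k+2}
    (Or.inr ⟨k, le_refl _, rfl⟩) (card_triple' k)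
    (fun x => by simp only [Finset.mem_insert, Finset.mem_singleton]; omega)
    (fun s hs hmem hcard => triple_eq hs hmem hcard)
  simpa using this

lemma ncard_step (n m j : ℕ) :
    pathBadCount j m (n+1) = pathBadCount j m n
      + {A | Good (n+1) m j A ∧ ∃ s ∈ A, n ∈ s ∧ s.card = 2}.ncard
      + {A | Good (n+1) m j A ∧ ∃ s ∈ A, n ∈ s ∧ s.card = 3}.ncard := by
  rw [pathBadCount_eq, pathBadCount_eq]
  have hsplit : {A | Good (n+1) m j A}
      = {A | Good n m j A}
        ∪ ({A | Good (n+1) m j A ∧ ∃ s ∈ A, n ∈ s ∧ s.card = 2}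
          ∪ {A | Good (n+1) m j A ∧ ∃ s ∈ A, n ∈ s ∧ s.card = 3}) := by
    ext A
    simp only [Set.mem_setOf_eq, Set.mem_union]
    constructor
    · intro hA
      by_cases hex : ∃ s ∈ A, n ∈ s
      · obtain ⟨s, hsA, hns⟩ := hex
        rcases card_of_mem_pathBadSets (hA.1 hsA) with h2 | h3
        · exact Or.inr (Or.inl ⟨hA, s, hsA, hns, h2⟩)
        · exact Or.inr (Or.inr ⟨hA, s, hsA, hns, h3⟩)
      · left
        refine ⟨?_, hA.2.1, hA.2.2.1, hA.2.2.2⟩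
        intro s hs
        apply pathBadSets_shrink (hA.1 hs)
        intro x hx
        have h1 : x < n + 1 := lt_of_mem_pathBadSets (hA.1 hs) hx
        have h2 : x ≠ n := fun h => hex ⟨s, hs, h ▸ hx⟩
        omega
    · rintro (hA | hA | hA)
      · exact ⟨fun s hs => pathBadSets_mono (by omega) (hA.1 hs), hA.2.1, hA.2.2.1, hA.2.2.2⟩
      · exact hA.1
      · exact hA.1
  have hd23 : Disjoint {A | Good (n+1) m j A ∧ ∃ s ∈ A, n ∈ s ∧ s.card = 2}
      {A | Good (n+1) m j A ∧ ∃ s ∈ A, n ∈ s ∧ s.card = 3} := by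
    rw [Set.disjoint_left]
    rintro A ⟨hA, s, hsA, hns, hs2⟩ ⟨_, t, htA, hnt, ht3⟩
    have hne : s ≠ t := fun h => by rw [h, ht3] at hs2; omega
    have := hA.2.2.1 (Finset.mem_coe.2 hsA) (Finset.mem_coe.2 htA) hne
    exact (Finset.disjoint_left.1 this hns) hnt
  have hd0 : Disjoint {A | Good n m j A}
      ({A | Good (n+1) m j A ∧ ∃ s ∈ A, n ∈ s ∧ s.card = 2}
        ∪ {A | Good (n+1) m j A ∧ ∃ s ∈ A, n ∈ s ∧ s.card = 3}) := by
    rw [Set.disjoint_left]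
    rintro A hA (⟨_, s, hsA, hns, _⟩ | ⟨_, s, hsA, hns, _⟩) <;>
      exact absurd (lt_of_mem_pathBadSets (hA.1 hsA) hns) (lt_irrefl n)
  have hf2 : {A | Good (n+1) m j A ∧ ∃ s ∈ A, n ∈ s ∧ s.card = 2}.Finite :=
    (good_finite (n+1) m j).subset (fun A hA => hA.1)
  have hf3 : {A | Good (n+1) m j A ∧ ∃ s ∈ A, n ∈ s ∧ s.card = 3}.Finite :=
    (good_finite (n+1) m j).subset (fun A hA => hA.1)
  rw [hsplit, Set.ncard_union_eq hd0 (good_finite n m j) (hf2.union hf3),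
    Set.ncard_union_eq hd23 hf2 hf3, add_assoc]

lemma pathBadCount_rec (n m j : ℕ) :
    pathBadCount j m (n+1) = pathBadCount j m n
      + (if 1 ≤ n ∧ 1 ≤ m ∧ 2 ≤ j then pathBadCount (j-2) (m-1) (n-1) else 0)
      + (if 2 ≤ n ∧ 1 ≤ m ∧ 3 ≤ j then pathBadCount (j-3) (m-1) (n-2) else 0) := by
  match n with
  | 0 =>
    rw [ncard_step 0 m j]
    have h2 : {A | Good 1 m j A ∧ ∃ s ∈ A, 0 ∈ s ∧ s.card = 2} = ∅ := by
      ext A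
      simp only [Set.mem_setOf_eq, Set.mem_empty_iff_false, iff_false, not_and]
      rintro hA ⟨s, hsA, _, _⟩
      rcases hA.1 hsA with ⟨i, hi, _⟩ | ⟨i, hi, _⟩ <;> omega
    have h3 : {A | Good 1 m j A ∧ ∃ s ∈ A, 0 ∈ s ∧ s.card = 3} = ∅ := by
      ext A
      simp only [Set.mem_setOf_eq, Set.mem_empty_iff_false, iff_false, not_and]
      rintro hA ⟨s, hsA, _, _⟩
      rcases hA.1 hsA with ⟨i, hi, _⟩ | ⟨i, hi, _⟩ <;> omega
    simp [h2, h3]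
  | 1 =>
    rw [ncard_step 1 m j]
    have h2 := ncard_pairCase 0 m j
    have h3 : {A | Good 2 m j A ∧ ∃ s ∈ A, 1 ∈ s ∧ s.card = 3} = ∅ := by
      ext A
      simp only [Set.mem_setOf_eq, Set.mem_empty_iff_false, iff_false, not_and]
      rintro hA ⟨s, hsA, _, hc3⟩
      rcases hA.1 hsA with ⟨i, hi, rfl⟩ | ⟨i, hi, _⟩
      · rw [card_pair'] at hc3; omega
      · omega
    rw [h2, h3]
    simp only [Set.ncard_empty]
    have : (if 1 ≤ m ∧ 2 ≤ j then pathBadCount (j - 2) (m - 1) 0 else 0)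
        = (if 1 ≤ 1 ∧ 1 ≤ m ∧ 2 ≤ j then pathBadCount (j - 2) (m - 1) (1 - 1) else 0) := by
      by_cases h : 1 ≤ m ∧ 2 ≤ j <;> simp [h]
    rw [this]
    simp
  | (k+2) =>
    rw [ncard_step (k+2) m j]
    have e2 := ncard_pairCase (k+1) m j
    have e3 := ncard_tripleCase k m j
    rw [show (k:ℕ) + 1 + 2 = k + 3 from rfl, show (k:ℕ) + 1 + 1 = k + 2 from rfl] at e2
    rw [e2, e3]
    have g2 : (if 1 ≤ m ∧ 2 ≤ j then pathBadCount (j - 2) (m - 1) (k+1) else 0)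
        = (if 1 ≤ k + 2 ∧ 1 ≤ m ∧ 2 ≤ j then pathBadCount (j - 2) (m - 1) (k + 2 - 1) else 0) := by
      by_cases h : 1 ≤ m ∧ 2 ≤ j <;> simp [h]
    have g3 : (if 1 ≤ m ∧ 3 ≤ j then pathBadCount (j - 3) (m - 1) k else 0)
        = (if 2 ≤ k + 2 ∧ 1 ≤ m ∧ 3 ≤ j then pathBadCount (j - 3) (m - 1) (k + 2 - 2) else 0) := by
      by_cases h : 1 ≤ m ∧ 3 ≤ j <;> simp [h]
    rw [g2, g3]

lemma key (n m j : ℕ) :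
    (pathBadCount j m n : ℤ)
      = (if n = 0 ∧ m = 0 ∧ j = 0 then 1 else 0)
        + (if 1 ≤ n then (pathBadCount j m (n-1) : ℤ) else 0)
        + (if 2 ≤ n ∧ 1 ≤ m ∧ 2 ≤ j then (pathBadCount (j-2) (m-1) (n-2) : ℤ) else 0)
        + (if 3 ≤ n ∧ 1 ≤ m ∧ 3 ≤ j then (pathBadCount (j-3) (m-1) (n-3) : ℤ) else 0) := by
  match n with
  | 0 =>
    rw [pathBadCount_zero]
    by_cases h : m = 0 ∧ j = 0 <;> simp [h]
  | (k+1) =>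
    rw [pathBadCount_rec k m j]
    push_cast
    simp

lemma keyZ (n m j : ℕ) :
    (-1:ℤ)^m * (pathBadCount j m n : ℤ)
        - (if 1 ≤ n then (-1:ℤ)^m * (pathBadCount j m (n-1) : ℤ) else 0)
        + (if 2 ≤ n ∧ 1 ≤ m ∧ 2 ≤ j then (-1:ℤ)^(m-1) * (pathBadCount (j-2) (m-1) (n-2) : ℤ) else 0)
        + (if 3 ≤ n ∧ 1 ≤ m ∧ 3 ≤ j then (-1:ℤ)^(m-1) * (pathBadCount (j-3) (m-1) (n-3) : ℤ) else 0)
      = if n = 0 ∧ m = 0 ∧ j = 0 then 1 else 0 := by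
  rw [key n m j]
  match m with
  | 0 =>
    split_ifs <;>
      first
        | ring1
        | (exfalso; omega)
        | tauto
  | (m'+1) =>
    simp only [Nat.add_sub_cancel, pow_succ]
    split_ifs <;>
      first
        | ring1
        | (exfalso; omega)
        | tauto

open MvPowerSeries in
theorem pathBadCount_generating_function
    (F : MvPowerSeries (Fin 3) ℤ)
    (hF : ∀ d : Fin 3 →₀ ℕ,
      MvPowerSeries.coeff d F = (-1) ^ (d 1) * pathBadCount (d 2) (d 1) (d 0)) :
    F * (1 - X 0 + (X 0) ^ 2 * X 1 * (X 2) ^ 2 + (X 0) ^ 3 * X 1 * (X 2) ^ 3) = 1 := by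
  classical
  set e1 : Fin 3 →₀ ℕ := Finsupp.single 0 1 with he1
  set e2 : Fin 3 →₀ ℕ := Finsupp.single 0 2 + Finsupp.single 1 1 + Finsupp.single 2 2 with he2
  set e3 : Fin 3 →₀ ℕ := Finsupp.single 0 3 + Finsupp.single 1 1 + Finsupp.single 2 3 with he3
  have hM2 : ((X 0)^2 * X 1 * (X 2)^2 : MvPowerSeries (Fin 3) ℤ) = monomial e2 1 := by
    rw [X_pow_eq, X_pow_eq,
      show (X 1 : MvPowerSeries (Fin 3) ℤ) = monomial (Finsupp.single 1 1) 1 from rfl,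
      monomial_mul_monomial, monomial_mul_monomial, one_mul, one_mul, he2]
  have hM3 : ((X 0)^3 * X 1 * (X 2)^3 : MvPowerSeries (Fin 3) ℤ) = monomial e3 1 := by
    rw [X_pow_eq, X_pow_eq,
      show (X 1 : MvPowerSeries (Fin 3) ℤ) = monomial (Finsupp.single 1 1) 1 from rfl,
      monomial_mul_monomial, monomial_mul_monomial, one_mul, one_mul, he3]
  have hX1 : (X 0 : MvPowerSeries (Fin 3) ℤ) = monomial e1 1 := rfl
  rw [hM2, hM3, hX1]
  ext d
  rw [mul_add, mul_add, mul_sub, mul_one, map_add, map_add, map_sub,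
    coeff_mul_monomial, coeff_mul_monomial, coeff_mul_monomial, coeff_one]
  have hs1 : (d - e1) 0 = d 0 - 1 ∧ (d - e1) 1 = d 1 ∧ (d - e1) 2 = d 2 := by
    refine ⟨?_, ?_, ?_⟩ <;> rw [Finsupp.tsub_apply] <;>
      simp [he1, Finsupp.single_apply]
  have hs2 : (d - e2) 0 = d 0 - 2 ∧ (d - e2) 1 = d 1 - 1 ∧ (d - e2) 2 = d 2 - 2 := by
    refine ⟨?_, ?_, ?_⟩ <;> rw [Finsupp.tsub_apply] <;>
      simp [he2, Finsupp.single_apply]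
  have hs3 : (d - e3) 0 = d 0 - 3 ∧ (d - e3) 1 = d 1 - 1 ∧ (d - e3) 2 = d 2 - 3 := by
    refine ⟨?_, ?_, ?_⟩ <;> rw [Finsupp.tsub_apply] <;>
      simp [he3, Finsupp.single_apply]
  have hle1 : e1 ≤ d ↔ 1 ≤ d 0 := Finsupp.single_le_iff
  have hle2 : e2 ≤ d ↔ 2 ≤ d 0 ∧ 1 ≤ d 1 ∧ 2 ≤ d 2 := by
    rw [Finsupp.le_def]
    constructor
    · intro h
      exact ⟨by simpa [he2, Finsupp.single_apply] using h 0,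
        by simpa [he2, Finsupp.single_apply] using h 1,
        by simpa [he2, Finsupp.single_apply] using h 2⟩
    · rintro ⟨h0, h1, h2⟩ i
      fin_cases i <;> simp [he2, Finsupp.single_apply] <;> omega
  have hle3 : e3 ≤ d ↔ 3 ≤ d 0 ∧ 1 ≤ d 1 ∧ 3 ≤ d 2 := by
    rw [Finsupp.le_def]
    constructor
    · intro h
      exact ⟨by simpa [he3, Finsupp.single_apply] using h 0,
        by simpa [he3, Finsupp.single_apply] using h 1,
        by simpa [he3, Finsupp.single_apply] using h 2⟩
    · rintro ⟨h0, h1, h2⟩ i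
      fin_cases i <;> simp [he3, Finsupp.single_apply] <;> omega
  have hd0 : d = 0 ↔ d 0 = 0 ∧ d 1 = 0 ∧ d 2 = 0 := by
    constructor
    · rintro rfl; simp
    · rintro ⟨h0, h1, h2⟩
      ext i
      fin_cases i <;> simpa
  rw [hF d, hF (d - e1), hF (d - e2), hF (d - e3), hs1.1, hs1.2.1, hs1.2.2,
    hs2.1, hs2.2.1, hs2.2.2, hs3.1, hs3.2.1, hs3.2.2,
    if_congr hle1 rfl rfl, if_congr hle2 rfl rfl, if_congr hle3 rfl rfl,
    if_congr hd0 rfl rfl]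
  simp only [mul_one]
  exact keyZ (d 0) (d 1) (d 2)
end
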